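/- For k ∈ N, the Gegenbauer–Fourier coefficients of σ_k on [-1,1] satisfy the asymptotic \hat{σ_k}(n) ≍ n^{−(d+2k+1)/2} over those n ∈ N with \hat{σ_k}(n) ≠ 0; i.e., there exist constants 0 < c ≤ C depending only on k and d such that c·n^{−(d+2k+1)/2} ≤ |\hat{σ_k}(n)| ≤ C·n^{−(d+2k+1)/2} whenever \hat{σ_k}(n) ≠ 0. In particular, taking \hat{σ_k}(n) = (ω_{d−1}/ω_d)·(k!(−1)^{(n−k−1)/2}/2^n)·Γ(d/2)Γ(n−k)/(Γ((n−k+1)/2)Γ((n+d+k+1)/2)) for n ≥ k+1 with n+1 ≡ k mod 2, prove this two-sided bound via Stirling's formula. -/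
import Mathlib


/-- The surface area `ω_d = 2π^{(d+1)/2}/Γ((d+1)/2)` of the unit sphere `S^d`. -/
noncomputable def sphereArea (d : ℕ) : ℝ :=
  2 * Real.pi ^ (((d : ℝ) + 1) / 2) / Real.Gamma (((d : ℝ) + 1) / 2)

open Real

lemma gauss_upper {x : ℝ} (hx : 0 < x) :
    Real.Gamma (x + 1/2) ≤ Real.Gamma x * x ^ ((1:ℝ)/2) := by
  have h := Real.Gamma_mul_add_mul_le_rpow_Gamma_mul_rpow_Gamma (s := x) (t := x + 1)
    hx (by linarith) one_half_pos one_half_pos (by norm_num)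
  have e1 : (1/2 : ℝ) * x + (1/2 : ℝ) * (x + 1) = x + 1/2 := by ring
  rw [e1, Real.Gamma_add_one hx.ne'] at h
  have hG := Real.Gamma_pos_of_pos hx
  calc Real.Gamma (x + 1/2) ≤ Real.Gamma x ^ ((1:ℝ)/2) * (x * Real.Gamma x) ^ ((1:ℝ)/2) := h
    _ = Real.Gamma x * x ^ ((1:ℝ)/2) := by
        rw [Real.mul_rpow hx.le hG.le, ← mul_assoc,
          mul_comm (Real.Gamma x ^ ((1:ℝ)/2)) (x ^ ((1:ℝ)/2)), mul_assoc,
          ← Real.rpow_add hG]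
        norm_num
        ring

lemma gauss_lower {x : ℝ} (hx : 0 < x) :
    Real.Gamma x * x ≤ Real.Gamma (x + 1/2) * (x + 1/2) ^ ((1:ℝ)/2) := by
  have hx2 : (0:ℝ) < x + 1/2 := by linarith
  have h := Real.Gamma_mul_add_mul_le_rpow_Gamma_mul_rpow_Gamma (s := x + 1/2) (t := x + 3/2)
    hx2 (by linarith) one_half_pos one_half_pos (by norm_num)
  have e1 : (1/2 : ℝ) * (x + 1/2) + (1/2 : ℝ) * (x + 3/2) = x + 1 := by ring
  have e2 : (x : ℝ) + 3/2 = (x + 1/2) + 1 := by ring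
  rw [e1, e2, Real.Gamma_add_one hx2.ne', Real.Gamma_add_one hx.ne'] at h
  have hG := Real.Gamma_pos_of_pos hx2
  calc Real.Gamma x * x = x * Real.Gamma x := by ring
    _ ≤ Real.Gamma (x + 1/2) ^ ((1:ℝ)/2) * ((x + 1/2) * Real.Gamma (x + 1/2)) ^ ((1:ℝ)/2) := h
    _ = Real.Gamma (x + 1/2) * (x + 1/2) ^ ((1:ℝ)/2) := by
        rw [Real.mul_rpow hx2.le hG.le, ← mul_assoc,
          mul_comm (Real.Gamma (x + 1/2) ^ ((1:ℝ)/2)) ((x + 1/2) ^ ((1:ℝ)/2)), mul_assoc,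
          ← Real.rpow_add hG]
        norm_num
        ring

lemma ratio_bound (m : ℕ) : ∃ c C : ℝ, 0 < c ∧ c ≤ C ∧ ∀ x : ℝ, 1/2 ≤ x →
    c * x ^ (-((m:ℝ)/2)) ≤ Real.Gamma x / Real.Gamma (x + (m:ℝ)/2) ∧
    Real.Gamma x / Real.Gamma (x + (m:ℝ)/2) ≤ C * x ^ (-((m:ℝ)/2)) := by
  induction m using Nat.twoStepInduction with
  | zero =>
    refine ⟨1, 1, one_pos, le_refl _, fun x hx => ?_⟩
    have hx0 : (0:ℝ) < x := by linarith
    norm_num [Real.rpow_zero]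
    rw [div_self (Real.Gamma_pos_of_pos hx0).ne']
    exact ⟨le_rfl, le_rfl⟩
  | one =>
    refine ⟨1, 2 ^ ((1:ℝ)/2), one_pos, Real.one_le_rpow one_le_two (by norm_num), fun x hx => ?_⟩
    have hx0 : (0:ℝ) < x := by linarith
    have hG := Real.Gamma_pos_of_pos hx0
    have hG2 := Real.Gamma_pos_of_pos (show (0:ℝ) < x + 1/2 by linarith)
    have hxr : (0:ℝ) < x ^ ((1:ℝ)/2) := Real.rpow_pos_of_pos hx0 _
    have hneg : x ^ (-((1:ℝ)/2)) = (x ^ ((1:ℝ)/2))⁻¹ := Real.rpow_neg hx0.le _ ▸ rfl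
    constructor
    · -- lower: from gauss_upper
      have h1 : Real.Gamma x / Real.Gamma (x + 1/2) ≥
          Real.Gamma x / (Real.Gamma x * x ^ ((1:ℝ)/2)) :=
        div_le_div_of_nonneg_left hG.le hG2 (by push_cast; exact gauss_upper hx0)
      have h2 : Real.Gamma x / (Real.Gamma x * x ^ ((1:ℝ)/2)) = x ^ (-((1:ℝ)/2)) := by
        rw [Real.rpow_neg hx0.le]
        field_simp
      push_cast
      rw [← h2]
      simpa using h1
    · -- upper: from gauss_lower
      have h1 : Real.Gamma x / Real.Gamma (x + 1/2) ≤ (x + 1/2) ^ ((1:ℝ)/2) / x := by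
        rw [div_le_div_iff₀ hG2 hx0]
        calc Real.Gamma x * x ≤ Real.Gamma (x + 1/2) * (x + 1/2) ^ ((1:ℝ)/2) := gauss_lower hx0
          _ = (x + 1/2) ^ ((1:ℝ)/2) * Real.Gamma (x + 1/2) := by ring
      have h2 : (x + 1/2) ^ ((1:ℝ)/2) ≤ 2 ^ ((1:ℝ)/2) * x ^ ((1:ℝ)/2) := by
        rw [← Real.mul_rpow zero_le_two hx0.le]
        exact Real.rpow_le_rpow (by linarith) (by linarith) (by norm_num)
      have h3' : x ^ ((1:ℝ)/2) / x = x ^ (-((1:ℝ)/2)) := by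
        rw [show -((1:ℝ)/2) = (1:ℝ)/2 - 1 by norm_num, Real.rpow_sub hx0, Real.rpow_one]
      have h3 : 2 ^ ((1:ℝ)/2) * x ^ ((1:ℝ)/2) / x = 2 ^ ((1:ℝ)/2) * x ^ (-((1:ℝ)/2)) := by
        rw [mul_div_assoc, h3']
      push_cast
      calc Real.Gamma x / Real.Gamma (x + 1/2) ≤ (x + 1/2) ^ ((1:ℝ)/2) / x := h1
        _ ≤ 2 ^ ((1:ℝ)/2) * x ^ ((1:ℝ)/2) / x := by gcongr
        _ = 2 ^ ((1:ℝ)/2) * x ^ (-((1:ℝ)/2)) := h3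
  | more m ih _ =>
    obtain ⟨c, C, hc, hcC, h⟩ := ih
    refine ⟨c / (m + 1), C, div_pos hc (by positivity), le_trans (by
      rw [div_le_iff₀ (by positivity : (0:ℝ) < (m:ℝ) + 1)]
      nlinarith [Nat.cast_nonneg (α := ℝ) m]) hcC, fun x hx => ?_⟩
    have hx0 : (0:ℝ) < x := by linarith
    obtain ⟨hl, hu⟩ := h x hx
    have hm0 : (0:ℝ) < x + (m:ℝ)/2 := by positivity
    have hGm := Real.Gamma_pos_of_pos hm0
    have hG := Real.Gamma_pos_of_pos hx0
    have hsplit : x + ((m:ℕ)+2:ℝ)/2 = (x + (m:ℝ)/2) + 1 := by push_cast; ring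
    have hcast : ((m + 2 : ℕ):ℝ) = (m:ℝ) + 2 := by push_cast; ring
    have hGam : Real.Gamma (x + ((m+2:ℕ):ℝ)/2) = (x + (m:ℝ)/2) * Real.Gamma (x + (m:ℝ)/2) := by
      rw [hcast, show x + ((m:ℝ)+2)/2 = (x + (m:ℝ)/2) + 1 by ring, Real.Gamma_add_one hm0.ne']
    have hratio : Real.Gamma x / Real.Gamma (x + ((m+2:ℕ):ℝ)/2)
        = (Real.Gamma x / Real.Gamma (x + (m:ℝ)/2)) * (x + (m:ℝ)/2)⁻¹ := by
      rw [hGam]; field_simp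
    have hxpow : x ^ (-(((m+2:ℕ):ℝ))/2) = x ^ (-((m:ℝ)/2)) * x⁻¹ := by
      rw [← Real.rpow_neg_one x, ← Real.rpow_add hx0]
      congr 1
      push_cast; ring
    constructor
    · rw [hratio, show -(((m+2:ℕ):ℝ)/2) = -((m+2:ℕ):ℝ)/2 by ring, hxpow]
      have hb : ((m:ℝ) + 1) * x ≥ x + (m:ℝ)/2 := by nlinarith [Nat.cast_nonneg (α := ℝ) m]
      have hinv : (((m:ℝ) + 1) * x)⁻¹ ≤ (x + (m:ℝ)/2)⁻¹ :=
        inv_anti₀ hm0 hb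
      calc c / ((m:ℝ) + 1) * (x ^ (-((m:ℝ)/2)) * x⁻¹)
          = (c * x ^ (-((m:ℝ)/2))) * (((m:ℝ) + 1) * x)⁻¹ := by
            rw [mul_inv]; ring
        _ ≤ (Real.Gamma x / Real.Gamma (x + (m:ℝ)/2)) * (x + (m:ℝ)/2)⁻¹ := by
            exact mul_le_mul hl hinv (by positivity) (div_pos hG hGm).le
    · rw [hratio, show -(((m+2:ℕ):ℝ)/2) = -((m+2:ℕ):ℝ)/2 by ring, hxpow]
      have hinv : (x + (m:ℝ)/2)⁻¹ ≤ x⁻¹ := inv_anti₀ hx0 (le_add_of_nonneg_right (by positivity))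
      calc (Real.Gamma x / Real.Gamma (x + (m:ℝ)/2)) * (x + (m:ℝ)/2)⁻¹
          ≤ (C * x ^ (-((m:ℝ)/2))) * x⁻¹ :=
            mul_le_mul hu hinv (by positivity)
              (mul_nonneg (hc.trans_le hcC).le (Real.rpow_pos_of_pos hx0 _).le)
        _ = C * (x ^ (-((m:ℝ)/2)) * x⁻¹) := by ring

lemma sphereArea_pos (d : ℕ) : 0 < sphereArea d := by
  unfold sphereArea
  have h1 : (0:ℝ) < ((d:ℝ) + 1) / 2 := by positivity
  exact div_pos (by positivity) (Real.Gamma_pos_of_pos h1)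


set_option maxHeartbeats 1000000 in
/-- The nonzero Gegenbauer–Fourier coefficients of `σ_k`, i.e.
`\hat{σ_k}(n) = (ω_{d−1}/ω_d)(k!(−1)^{(n−k−1)/2}/2^n) Γ(d/2)Γ(n−k)/(Γ((n−k+1)/2)Γ((n+d+k+1)/2))`
for `n ≥ k+1` with `n+1 ≡ k (mod 2)`, satisfy the two-sided bound
`c n^{−(d+2k+1)/2} ≤ |\hat{σ_k}(n)| ≤ C n^{−(d+2k+1)/2}` for constants `0 < c ≤ C`
depending only on `k` and `d` (via Stirling's formula). -/
theorem reluPow_gegenbauer_coeff_asymptotics (d k : ℕ) (hd : 1 ≤ d) :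
    ∃ c C : ℝ, 0 < c ∧ c ≤ C ∧
      ∀ n : ℕ, k + 1 ≤ n → (n + 1) % 2 = k % 2 →
        c * (n : ℝ) ^ (-(((d : ℝ) + 2 * k + 1) / 2)) ≤
          |(sphereArea (d - 1) / sphereArea d) *
            ((k.factorial : ℝ) * (-1 : ℝ) ^ ((n - k - 1) / 2) / 2 ^ n) *
            (Real.Gamma ((d : ℝ) / 2) * Real.Gamma ((n : ℝ) - (k : ℝ)) /
              (Real.Gamma (((n : ℝ) - (k : ℝ) + 1) / 2) *
                Real.Gamma (((n : ℝ) + (d : ℝ) + (k : ℝ) + 1) / 2)))| ∧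
        |(sphereArea (d - 1) / sphereArea d) *
            ((k.factorial : ℝ) * (-1 : ℝ) ^ ((n - k - 1) / 2) / 2 ^ n) *
            (Real.Gamma ((d : ℝ) / 2) * Real.Gamma ((n : ℝ) - (k : ℝ)) /
              (Real.Gamma (((n : ℝ) - (k : ℝ) + 1) / 2) *
                Real.Gamma (((n : ℝ) + (d : ℝ) + (k : ℝ) + 1) / 2)))| ≤
          C * (n : ℝ) ^ (-(((d : ℝ) + 2 * k + 1) / 2)) := by
  obtain ⟨cr, Cr, hcr, hcrCr, hr⟩ := ratio_bound (d + 2 * k + 1)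
  set a : ℝ := ((d : ℝ) + 2 * k + 1) / 2 with ha
  have ha0 : 0 < a := by positivity
  set B : ℝ := (sphereArea (d - 1) / sphereArea d) * (k.factorial : ℝ) *
      Real.Gamma ((d : ℝ) / 2) * (2:ℝ) ^ (-(k:ℝ) - 1) / Real.sqrt Real.pi with hBdef
  have hd2 : (0:ℝ) < (d:ℝ) / 2 := by
    have : (1:ℝ) ≤ (d:ℝ) := by exact_mod_cast hd
    linarith
  have hB : 0 < B := by
    apply div_pos
    · have := sphereArea_pos (d - 1)
      have := sphereArea_pos d
      have := Real.Gamma_pos_of_pos hd2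
      have h1 : (0:ℝ) < (2:ℝ) ^ (-(k:ℝ) - 1) := Real.rpow_pos_of_pos two_pos _
      have h2 : (0:ℝ) < (k.factorial : ℝ) := by exact_mod_cast k.factorial_pos
      positivity
    · exact Real.sqrt_pos.mpr Real.pi_pos
  have hkcast : (0:ℝ) ≤ (k:ℝ) := Nat.cast_nonneg k
  have hkk : (0:ℝ) < 2 * (k:ℝ) + 2 := by positivity
  have h1t : (1:ℝ) ≤ (2 * (k:ℝ) + 2) ^ a :=
    Real.one_le_rpow (by linarith) ha0.le
  refine ⟨B * cr, B * Cr * (2 * (k:ℝ) + 2) ^ a, by positivity, ?_, ?_⟩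
  · calc B * cr ≤ B * Cr := by nlinarith
      _ ≤ B * Cr * (2 * (k:ℝ) + 2) ^ a :=
          le_mul_of_one_le_right (by nlinarith) h1t
  intro n hn _
  have hn' : (k:ℝ) + 1 ≤ (n:ℝ) := by exact_mod_cast hn
  have hk0 : (0:ℝ) ≤ (k:ℝ) := Nat.cast_nonneg k
  have hn0 : (0:ℝ) < (n:ℝ) := by linarith
  obtain ⟨x, hxdef⟩ : ∃ x : ℝ, x = ((n:ℝ) - (k:ℝ)) / 2 := ⟨_, rfl⟩
  have hx : (1:ℝ)/2 ≤ x := by rw [hxdef]; linarith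
  have hx0 : (0:ℝ) < x := by linarith
  have hGx := Real.Gamma_pos_of_pos hx0
  have hGxh := Real.Gamma_pos_of_pos (show (0:ℝ) < x + 1/2 by linarith)
  have hM0 : (0:ℝ) < x + ((d + 2*k + 1 : ℕ):ℝ)/2 := by positivity
  have hGM := Real.Gamma_pos_of_pos hM0
  have hsqrt : (0:ℝ) < Real.sqrt Real.pi := Real.sqrt_pos.mpr Real.pi_pos
  -- duplication formula
  have hdup := Real.Gamma_mul_Gamma_add_half x
  have h2x : 2 * x = (n:ℝ) - (k:ℝ) := by rw [hxdef]; ring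
  rw [h2x] at hdup
  have hfact : (2:ℝ) ^ ((1:ℝ) - ((n:ℝ) - (k:ℝ))) * (2:ℝ) ^ (((n:ℝ) - (k:ℝ)) - 1) = 1 := by
    rw [← Real.rpow_add two_pos]; norm_num
  have hGnk : Real.Gamma ((n:ℝ) - (k:ℝ)) * Real.sqrt Real.pi
      = Real.Gamma x * Real.Gamma (x + 1/2) * (2:ℝ) ^ (((n:ℝ) - (k:ℝ)) - 1) := by
    linear_combination (-(2:ℝ) ^ (((n:ℝ) - (k:ℝ)) - 1)) * hdup
      - Real.Gamma ((n:ℝ) - (k:ℝ)) * Real.sqrt Real.pi * hfact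
  have hpow2 : (2:ℝ) ^ (((n:ℝ) - (k:ℝ)) - 1) = 2 ^ n * (2:ℝ) ^ (-(k:ℝ) - 1) := by
    rw [← Real.rpow_natCast 2 n, ← Real.rpow_add two_pos]
    congr 1; ring
  have h1 : ((n:ℝ) - (k:ℝ) + 1)/2 = x + 1/2 := by rw [hxdef]; ring
  have h2 : ((n:ℝ) + (d:ℝ) + (k:ℝ) + 1)/2 = x + ((d + 2*k + 1 : ℕ):ℝ)/2 := by
    rw [hxdef]; push_cast; ring
  have h2n : (0:ℝ) < (2:ℝ) ^ n := by positivity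
  have hEeq : (sphereArea (d - 1) / sphereArea d) *
            ((k.factorial : ℝ) * (-1 : ℝ) ^ ((n - k - 1) / 2) / 2 ^ n) *
            (Real.Gamma ((d : ℝ) / 2) * Real.Gamma ((n : ℝ) - (k : ℝ)) /
              (Real.Gamma (((n : ℝ) - (k : ℝ) + 1) / 2) *
                Real.Gamma (((n : ℝ) + (d : ℝ) + (k : ℝ) + 1) / 2)))
      = (-1 : ℝ) ^ ((n - k - 1) / 2) *
          (B * (Real.Gamma x / Real.Gamma (x + ((d + 2*k + 1 : ℕ):ℝ)/2))) := by
    rw [h1, h2, hBdef]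
    have hGnk' : Real.Gamma ((n:ℝ) - (k:ℝ))
        = Real.Gamma x * Real.Gamma (x + 1/2) * ((2:ℝ) ^ n * (2:ℝ) ^ (-(k:ℝ) - 1))
          / Real.sqrt Real.pi := by
      rw [← hpow2, eq_div_iff hsqrt.ne']; linarith [hGnk]
    rw [hGnk']
    have h2nz : ((2:ℝ) ^ n) ≠ 0 := h2n.ne'
    field_simp [hGxh.ne', hGM.ne', hsqrt.ne', (sphereArea_pos d).ne', h2nz]
  have habs : |(sphereArea (d - 1) / sphereArea d) *
            ((k.factorial : ℝ) * (-1 : ℝ) ^ ((n - k - 1) / 2) / 2 ^ n) *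
            (Real.Gamma ((d : ℝ) / 2) * Real.Gamma ((n : ℝ) - (k : ℝ)) /
              (Real.Gamma (((n : ℝ) - (k : ℝ) + 1) / 2) *
                Real.Gamma (((n : ℝ) + (d : ℝ) + (k : ℝ) + 1) / 2)))|
      = B * (Real.Gamma x / Real.Gamma (x + ((d + 2*k + 1 : ℕ):ℝ)/2)) := by
    rw [hEeq, abs_mul, abs_pow, abs_neg, abs_one, one_pow, one_mul]
    exact abs_of_nonneg (mul_nonneg hB.le (div_pos hGx hGM).le)
  obtain ⟨hl, hu⟩ := hr x hx
  have hMa : ((d + 2*k + 1 : ℕ):ℝ)/2 = a := by rw [ha]; push_cast; ring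
  rw [hMa] at hl hu habs
  rw [habs]
  -- compare x and n powers
  have hxn : x ≤ (n:ℝ) := by rw [hxdef]; linarith
  have hlow : (n:ℝ) ^ (-a) ≤ x ^ (-a) :=
    Real.rpow_le_rpow_of_nonpos hx0 hxn (neg_nonpos.mpr ha0.le)
  have hnx : (n:ℝ) / (2 * (k:ℝ) + 2) ≤ x := by
    rw [hxdef, div_le_div_iff₀ hkk two_pos]
    have hkey := mul_nonneg hk0 (by linarith : (0:ℝ) ≤ (n:ℝ) - (k:ℝ) - 1)
    nlinarith [hkey]
  have hupx : x ^ (-a) ≤ (2 * (k:ℝ) + 2) ^ a * (n:ℝ) ^ (-a) := by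
    have h1' : x ^ (-a) ≤ ((n:ℝ) / (2 * (k:ℝ) + 2)) ^ (-a) :=
      Real.rpow_le_rpow_of_nonpos (by positivity) hnx (neg_nonpos.mpr ha0.le)
    have h2' : ((n:ℝ) / (2 * (k:ℝ) + 2)) ^ (-a) = (2 * (k:ℝ) + 2) ^ a * (n:ℝ) ^ (-a) := by
      rw [div_eq_mul_inv, Real.mul_rpow hn0.le (by positivity),
        Real.inv_rpow hkk.le, Real.rpow_neg hkk.le, inv_inv]
      ring
    linarith [h1', h2'.le, h2'.ge]
  constructor
  · calc B * cr * (n:ℝ) ^ (-a) ≤ B * cr * x ^ (-a) := by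
          apply mul_le_mul_of_nonneg_left hlow (by positivity)
      _ = B * (cr * x ^ (-a)) := by ring
      _ ≤ B * (Real.Gamma x / Real.Gamma (x + a)) :=
          mul_le_mul_of_nonneg_left hl hB.le
  · calc B * (Real.Gamma x / Real.Gamma (x + a)) ≤ B * (Cr * x ^ (-a)) :=
          mul_le_mul_of_nonneg_left hu hB.le
      _ ≤ B * (Cr * ((2 * (k:ℝ) + 2) ^ a * (n:ℝ) ^ (-a))) := by
          apply mul_le_mul_of_nonneg_left _ hB.le
          apply mul_le_mul_of_nonneg_left hupx (by nlinarith)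
      _ = B * Cr * (2 * (k:ℝ) + 2) ^ a * (n:ℝ) ^ (-a) := by ring
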